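/- The number of permutations in S_n in which every digit is a separator equals 2^k · k! if n = 4k for some k ≥ 1, and equals 0 otherwise. -/

import Mathlib

/-- The entry at position `k` of `σ` (0-indexed) is a *vertical separator*:
there are positions `j, j+1, j+2` with `k = j+1` and `|σ j - σ (j+2)| = 1`. -/
def IsVSepPos {n : ℕ} (σ : Equiv.Perm (Fin n)) (k : Fin n) : Prop :=
  ∃ (j : ℕ) (h : j + 2 < n), (k : ℕ) = j + 1 ∧
    (((σ ⟨j, by omega⟩).val : ℤ) - ((σ ⟨j + 2, h⟩).val : ℤ)).natAbs = 1

/-- The value `b` is a vertical separator of `σ`. -/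
def IsVSepVal {n : ℕ} (σ : Equiv.Perm (Fin n)) (b : Fin n) : Prop :=
  IsVSepPos σ (σ⁻¹ b)

/-- The value `a` is a *horizontal separator* of `σ`: the values `a-1` and `a+1`
occupy adjacent positions of `σ` (their sum is `2a` and they differ by `2`). -/
def IsHSepVal {n : ℕ} (σ : Equiv.Perm (Fin n)) (a : Fin n) : Prop :=
  ∃ (j : ℕ) (h : j + 1 < n),
    (((σ ⟨j, by omega⟩).val : ℤ) - ((σ ⟨j + 1, h⟩).val : ℤ)).natAbs = 2 ∧
    ((σ ⟨j, by omega⟩).val : ℤ) + ((σ ⟨j + 1, h⟩).val : ℤ) = 2 * (a : ℤ)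

/-- `σ` has a bond at positions `j, j+1`. -/
def PermBondAt {n : ℕ} (σ : Equiv.Perm (Fin n)) (j : ℕ) (h : j + 1 < n) : Prop :=
  (((σ ⟨j, by omega⟩).val : ℤ) - ((σ ⟨j + 1, h⟩).val : ℤ)).natAbs = 1

/-- The sequence obtained from `σ` by deleting the entry at position `p`
and standardizing. -/
def delSeq {n : ℕ} (σ : Equiv.Perm (Fin n)) (p : Fin n) : Fin (n - 1) → ℕ :=
  fun k =>
    let q : Fin n :=
      if (k : ℕ) < (p : ℕ) then ⟨k, by have := k.isLt; omega⟩
      else ⟨(k : ℕ) + 1, by have := k.isLt; omega⟩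
    if (σ q).val < (σ p).val then (σ q).val else (σ q).val - 1

/-- A sequence has a bond at positions `j, j+1`. -/
def SeqBondAt {m : ℕ} (g : Fin m → ℕ) (j : ℕ) (h : j + 1 < m) : Prop :=
  ((g ⟨j, by omega⟩ : ℤ) - (g ⟨j + 1, h⟩ : ℤ)).natAbs = 1

/-- The number of bonds of a sequence. -/
noncomputable def seqBondCount {m : ℕ} (g : Fin m → ℕ) : ℕ :=
  Nat.card {p : Fin m × Fin m //
    (p.2 : ℕ) = (p.1 : ℕ) + 1 ∧ ((g p.1 : ℤ) - (g p.2 : ℤ)).natAbs = 1}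

/-- The number of bonds of `σ`. -/
noncomputable def bondCount {n : ℕ} (σ : Equiv.Perm (Fin n)) : ℕ :=
  Nat.card {p : Fin n × Fin n //
    (p.2 : ℕ) = (p.1 : ℕ) + 1 ∧ (((σ p.1).val : ℤ) - ((σ p.2).val : ℤ)).natAbs = 1}

/-!
Write a permutation of `{0, …, n-1}` as its sequence of values `f`. The value `0` can only be a
vertical separator, between some `x` and `x + 1`; the separators of `x`, `x + 1` and `x - 1` then
force `x = 2` and the block `2 0 3 1` (or its mirror image `1 3 0 2`). The only other candidate,
`3 1 0 2`, would extend to an endless staircase `… 5 3 1 0 2 4 …`. Deleting this block keeps every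
digit a separator, so by induction the rest is an inflation of a permutation by the blocks `2031`
and `1302`. The deleted block sits at a position divisible by `4`: otherwise it splits a block of
the rest, and one digit of the split block has no separator left. Conversely every such inflation
has only separators, and it is determined by the permutation of the `k = n / 4` blocks together
with `k` choices of pattern, whence `2 ^ k * k!`.
-/

open Set

namespace Separators

def IsVSep (n : ℕ) (f : ℕ → ℕ) (b : ℕ) : Prop :=
  ∃ j, j + 2 < n ∧ f (j + 1) = b ∧ (f j = f (j + 2) + 1 ∨ f (j + 2) = f j + 1)

def IsHSep (n : ℕ) (f : ℕ → ℕ) (a : ℕ) : Prop :=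
  ∃ j, j + 1 < n ∧ ((f j = a + 1 ∧ f (j + 1) + 1 = a) ∨ (f (j + 1) = a + 1 ∧ f j + 1 = a))

def AllSep (n : ℕ) (f : ℕ → ℕ) : Prop := ∀ b < n, IsVSep n f b ∨ IsHSep n f b

-- The patterns `3142` and `2413` of the paper, 0-indexed and shifted by `w`.
def IsBlock (f : ℕ → ℕ) (q w : ℕ) : Prop :=
  (f q = w + 2 ∧ f (q + 1) = w ∧ f (q + 2) = w + 3 ∧ f (q + 3) = w + 1) ∨
    (f q = w + 1 ∧ f (q + 1) = w + 3 ∧ f (q + 2) = w ∧ f (q + 3) = w + 2)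

def IsInflation (n : ℕ) (f : ℕ → ℕ) : Prop :=
  n % 4 = 0 ∧ ∀ i, 4 * i < n → ∃ c, IsBlock f (4 * i) (4 * c)

variable {n : ℕ} {f : ℕ → ℕ}

theorem AllSep.sep_apply (h : AllSep n f) (hf : MapsTo f (Iio n) (Iio n)) {j : ℕ} (hj : j < n) :
    IsVSep n f (f j) ∨ IsHSep n f (f j) :=
  h _ (hf hj)

theorem IsBlock.sep_add {q w : ℕ} (hb : IsBlock f q w) (hq : q + 3 < n) {t : ℕ}
    (ht : t < 4) : IsVSep n f (w + t) ∨ IsHSep n f (w + t) := by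
  unfold IsVSep IsHSep
  rcases hb with hb | hb <;> interval_cases t
  · exact Or.inl ⟨q, by omega, by omega⟩
  · exact Or.inr ⟨q, by omega, by omega⟩
  · exact Or.inr ⟨q + 2, by omega, by simp only [Nat.add_assoc, Nat.reduceAdd]; omega⟩
  · exact Or.inl ⟨q + 1, by omega, by simp only [Nat.add_assoc, Nat.reduceAdd]; omega⟩
  · exact Or.inl ⟨q + 1, by omega, by simp only [Nat.add_assoc, Nat.reduceAdd]; omega⟩
  · exact Or.inr ⟨q + 2, by omega, by simp only [Nat.add_assoc, Nat.reduceAdd]; omega⟩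
  · exact Or.inr ⟨q, by omega, by omega⟩
  · exact Or.inl ⟨q, by omega, by omega⟩

theorem staircase_step (h : AllSep n f) (hf : BijOn f (Iio n) (Iio n)) {s l M : ℕ}
    (hlM : l + 2 * s = M) (hMn : M + 1 < n) (hl : f l = 2 * s + 1) (hl1 : f (l + 1) = 2 * s - 1)
    (hM : f M = 2 * s - 2) (hM1 : f (M + 1) = 2 * s) :
    ∃ l', l' + 1 = l ∧ M + 2 < n ∧ f l' = 2 * s + 3 ∧ f (M + 2) = 2 * s + 2 := by
  have hinj : ∀ i j, i < n → j < n → f i = f j → i = j := fun i j hi hj => hf.injOn hi hj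
  have hsl := h.sep_apply hf.mapsTo (show l < n by omega)
  unfold IsVSep IsHSep at hsl
  have hM2 : M + 2 < n ∧ f (M + 2) = 2 * s + 2 := by grind (splits := 24) (instances := 5000)
  have hsM := h.sep_apply hf.mapsTo hM2.1
  unfold IsVSep IsHSep at hsM
  grind (splits := 24) (instances := 5000)

theorem not_staircase (h : AllSep n f) (hf : BijOn f (Iio n) (Iio n)) {m : ℕ} (hm : m + 3 < n)
    (h3 : f m = 3) (h1 : f (m + 1) = 1) (h0 : f (m + 2) = 0) (h2 : f (m + 3) = 2) : False := by
  have stair : ∀ s, 1 ≤ s → ∃ l, l + s = m + 1 ∧ m + s + 2 < n ∧ f l = 2 * s + 1 ∧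
      f (l + 1) = 2 * s - 1 ∧ f (m + s + 1) = 2 * s - 2 ∧ f (m + s + 2) = 2 * s := by
    intro s hs
    induction s, hs using Nat.le_induction with
    | base => exact ⟨m, by omega, by omega, h3, h1, h0, h2⟩
    | succ s hs ih =>
      obtain ⟨l, hsl, hMn, hl, hl1, hM, hM1⟩ := ih
      obtain ⟨l', rfl, hMn', hl', hM2⟩ := staircase_step h hf (by omega) hMn hl hl1 hM hM1
      refine ⟨l', by omega, by omega, by omega, by omega, ?_, ?_⟩
      · rw [show m + (s + 1) + 1 = m + s + 2 by omega]; omega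
      · rw [show m + (s + 1) + 2 = m + s + 1 + 2 by omega]; omega
  obtain ⟨l, hl, -⟩ := stair (m + 2) (by omega)
  omega

theorem around_zero_of_ascending (h : AllSep n f) (hf : BijOn f (Iio n) (Iio n)) {p : ℕ}
    (hp : p + 2 < n) (h0 : f (p + 1) = 0) (hlt : f (p + 2) = f p + 1) :
    p + 3 < n ∧ f p = 2 ∧ f (p + 2) = 3 ∧ f (p + 3) = 1 := by
  have hinj : ∀ i j, i < n → j < n → f i = f j → i = j := fun i j hi hj => hf.injOn hi hj
  have hx : f p ≠ 0 := fun hx => absurd (hinj p (p + 1) (by omega) (by omega) (by omega)) (by omega)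
  have sep_x :
      (∃ j, j + 1 = p ∧ f j = 1) ∨ f p = 1 ∨ (p + 3 < n ∧ f (p + 3) + 1 = f p) := by
    have := h.sep_apply hf.mapsTo (show p < n by omega)
    unfold IsVSep IsHSep at this
    grind (splits := 24) (instances := 5000)
  have sep_x1 : (p + 3 < n ∧ f (p + 3) = 1) ∨ (∃ j, j + 1 = p ∧ f j = f p + 2) := by
    have := h.sep_apply hf.mapsTo hp
    unfold IsVSep IsHSep at this
    grind (splits := 24) (instances := 5000)
  rcases sep_x with ⟨j, rfl, hj⟩ | hx1 | ⟨hp3, hx3⟩ <;>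
    rcases sep_x1 with ⟨hp3', hx3'⟩ | ⟨j', hj', hx2⟩
  · grind
  · obtain rfl : j' = j := by omega
    omega
  · grind
  · obtain rfl : j' = p - 1 := by omega
    exact (not_staircase h hf (m := p - 1) (by omega) (by grind) (by grind) (by grind)
      (by grind)).elim
  · omega
  · have := h.sep_apply hf.mapsTo hp3
    unfold IsVSep IsHSep at this
    grind (splits := 24) (instances := 5000)

theorem bijOn_rev (hf : BijOn f (Iio n) (Iio n)) :
    BijOn (fun j => f (n - 1 - j)) (Iio n) (Iio n) := by
  have hrev : BijOn (fun j => n - 1 - j) (Iio n) (Iio n) := by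
    refine ⟨fun j hj => ?_, fun i hi j hj h => ?_, fun i hi => ⟨n - 1 - i, ?_, ?_⟩⟩ <;>
      simp_all only [mem_Iio] <;> omega
  exact hf.comp hrev

theorem AllSep.rev (h : AllSep n f) : AllSep n (fun j => f (n - 1 - j)) := by
  intro b hb
  rcases h b hb with ⟨j, hj, hv, hd⟩ | ⟨j, hj, hd⟩
  · refine Or.inl ⟨n - 3 - j, by omega, ?_, ?_⟩
    · simpa only [show n - 1 - (n - 3 - j + 1) = j + 1 by omega]
    · simp only [show n - 1 - (n - 3 - j) = j + 2 by omega,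
        show n - 1 - (n - 3 - j + 2) = j by omega]
      omega
  · refine Or.inr ⟨n - 2 - j, by omega, ?_⟩
    simp only [show n - 1 - (n - 2 - j) = j + 1 by omega, show n - 1 - (n - 2 - j + 1) = j by omega]
    omega

theorem exists_isBlock_zero (h : AllSep n f) (hf : BijOn f (Iio n) (Iio n)) (hn : 0 < n) :
    ∃ q, q + 3 < n ∧ IsBlock f q 0 := by
  rcases h 0 hn with ⟨j, hj, h0, hd | hd⟩ | ⟨j, hj, hd⟩
  · have := around_zero_of_ascending h.rev (bijOn_rev hf) (p := n - 3 - j) (by omega)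
      (by rwa [show n - 1 - (n - 3 - j + 1) = j + 1 by omega])
      (by rw [show n - 1 - (n - 3 - j + 2) = j by omega, show n - 1 - (n - 3 - j) = j + 2 by omega]
          omega)
    simp only [show n - 1 - (n - 3 - j) = j + 2 by omega, show n - 1 - (n - 3 - j + 2) = j by omega,
      show n - 1 - (n - 3 - j + 3) = j - 1 by omega] at this
    refine ⟨j - 1, by omega, Or.inr ?_⟩
    rw [show j - 1 + 1 = j by omega, show j - 1 + 2 = j + 1 by omega,
      show j - 1 + 3 = j + 2 by omega]
    omega
  · have := around_zero_of_ascending h hf hj h0 hd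
    exact ⟨j, by omega, Or.inl (by omega)⟩
  · omega

theorem apply_lt_four_iff (hf : BijOn f (Iio n) (Iio n)) {q : ℕ} (hq : q + 3 < n)
    (hb : IsBlock f q 0) {z : ℕ} (hz : z < n) : f z < 4 ↔ q ≤ z ∧ z ≤ q + 3 := by
  have hinj : ∀ i j, i < n → j < n → f i = f j → i = j := fun i j hi hj => hf.injOn hi hj
  unfold IsBlock at hb
  grind (splits := 24) (instances := 5000)

def liftPos (q z : ℕ) : ℕ := if z < q then z else z + 4

def dropBlock (f : ℕ → ℕ) (q z : ℕ) : ℕ := f (liftPos q z) - 4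

theorem not_isBlock_liftPos_of_split (h : AllSep n f) (hf : BijOn f (Iio n) (Iio n))
    {u r c : ℕ} (hr : 1 ≤ r ∧ r ≤ 3) (hu : 4 * u + 7 < n) (hb : IsBlock f (4 * u + r) 0)
    (hleft : ∀ p, p + 1 = 4 * u → f p % 4 = 1 ∨ f p % 4 = 2)
    (hright : 4 * u + 8 < n → f (4 * u + 8) % 4 = 1 ∨ f (4 * u + 8) % 4 = 2) :
    ¬ IsBlock (fun z => f (liftPos (4 * u + r) z)) (4 * u) (4 * c + 4) := by
  have hinj : ∀ i j, i < n → j < n → f i = f j → i = j := fun i j hi hj => hf.injOn hi hj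
  intro hsplit
  -- In each of the six cases one digit of the split block has lost its separator witnesses to
  -- the inserted block; `hleft` and `hright` rule out the neighbouring blocks.
  obtain ⟨hr1, hr3⟩ := hr
  unfold IsBlock at hb hsplit
  interval_cases r <;>
    simp (disch := omega) only [liftPos, if_pos, if_neg, Nat.add_assoc, Nat.reduceAdd,
      Nat.zero_add] at hsplit hb <;>
    rcases hsplit with hs | hs
  · have := h.sep_apply hf.mapsTo (show 4 * u + 5 < n by omega)
    unfold IsVSep IsHSep at this
    grind (splits := 24) (instances := 5000)
  · have := h.sep_apply hf.mapsTo (show 4 * u + 5 < n by omega)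
    unfold IsVSep IsHSep at this
    grind (splits := 24) (instances := 5000)
  · have := h.sep_apply hf.mapsTo (show 4 * u + 1 < n by omega)
    unfold IsVSep IsHSep at this
    grind (splits := 24) (instances := 5000)
  · have := h.sep_apply hf.mapsTo (show 4 * u + 1 < n by omega)
    unfold IsVSep IsHSep at this
    grind (splits := 24) (instances := 5000)
  · have := h.sep_apply hf.mapsTo (show 4 * u < n by omega)
    unfold IsVSep IsHSep at this
    grind (splits := 24) (instances := 5000)
  · have := h.sep_apply hf.mapsTo (show 4 * u + 2 < n by omega)
    unfold IsVSep IsHSep at this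
    grind (splits := 24) (instances := 5000)

section dropBlock

variable {q : ℕ} (hf : BijOn f (Iio n) (Iio n)) (hq : q + 3 < n) (hb : IsBlock f q 0)
include hf hq hb

theorem liftPos_lt_and_four_le_apply {z : ℕ} (hz : z < n - 4) :
    liftPos q z < n ∧ 4 ≤ f (liftPos q z) := by
  have hz' : liftPos q z < n := by unfold liftPos; split_ifs <;> omega
  refine ⟨hz', not_lt.mp ((apply_lt_four_iff hf hq hb hz').not.mpr ?_)⟩
  unfold liftPos; split_ifs <;> omega

theorem bijOn_dropBlock : BijOn (dropBlock f q) (Iio (n - 4)) (Iio (n - 4)) := by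
  have hmaps : MapsTo (dropBlock f q) (Iio (n - 4)) (Iio (n - 4)) := fun z hz => by
    have := liftPos_lt_and_four_le_apply hf hq hb hz
    have := hf.mapsTo this.1
    simp only [mem_Iio, dropBlock] at *
    omega
  refine ((finite_Iio _).injOn_iff_bijOn_of_mapsTo hmaps).mp fun i hi j hj hij => ?_
  have hi' := liftPos_lt_and_four_le_apply hf hq hb hi
  have hj' := liftPos_lt_and_four_le_apply hf hq hb hj
  have := hf.injOn hi'.1 hj'.1 (by simp only [dropBlock] at hij; omega)
  simp only [mem_Iio, liftPos] at hi hj this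
  split_ifs at this <;> omega

theorem AllSep.dropBlock (h : AllSep n f) : AllSep (n - 4) (dropBlock f q) := by
  -- A witness for `b + 4` cannot touch the deleted block: it holds the values `0, …, 3`, with
  -- `1` or `2` at both ends.
  have key := fun z => apply_lt_four_iff hf hq hb (z := z)
  intro b hb'
  rcases h (b + 4) (by omega) with ⟨j, hj, hv, hd⟩ | ⟨j, hj, hd⟩
  · have k0 := key (z := j) (by omega)
    have k1 := key (z := j + 1) (by omega)
    have k2 := key (z := j + 2) (by omega)
    have : j + 2 < q ∨ q + 3 < j := by unfold IsBlock at hb; grind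
    rcases this with hlt | hgt
    · exact Or.inl ⟨j, by omega, by grind [Separators.dropBlock, liftPos],
        by grind [Separators.dropBlock, liftPos]⟩
    · obtain ⟨j, rfl⟩ : ∃ j', j = j' + 4 := ⟨j - 4, by omega⟩
      exact Or.inl ⟨j, by omega, by grind [Separators.dropBlock, liftPos],
        by grind [Separators.dropBlock, liftPos]⟩
  · have k0 := key (z := j) (by omega)
    have k1 := key (z := j + 1) (by omega)
    have : j + 1 < q ∨ q + 3 < j := by unfold IsBlock at hb; grind
    rcases this with hlt | hgt
    · exact Or.inr ⟨j, by omega, by grind [Separators.dropBlock, liftPos]⟩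
    · obtain ⟨j, rfl⟩ : ∃ j', j = j' + 4 := ⟨j - 4, by omega⟩
      exact Or.inr ⟨j, by omega, by grind [Separators.dropBlock, liftPos]⟩

theorem IsBlock.comp_liftPos {p w : ℕ} (hp : p + 3 < n - 4) (hg : IsBlock (dropBlock f q) p w) :
    IsBlock (fun z => f (liftPos q z)) p (w + 4) := by
  have h0 := liftPos_lt_and_four_le_apply hf hq hb (z := p) (by omega)
  have h1 := liftPos_lt_and_four_le_apply hf hq hb (z := p + 1) (by omega)
  have h2 := liftPos_lt_and_four_le_apply hf hq hb (z := p + 2) (by omega)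
  have h3 := liftPos_lt_and_four_le_apply hf hq hb (z := p + 3) (by omega)
  simp only [IsBlock, dropBlock] at hg ⊢
  omega

theorem isBlock_of_dropBlock_of_lt {p w : ℕ} (hp : p + 3 < q) (hg : IsBlock (dropBlock f q) p w) :
    IsBlock f p (w + 4) := by
  have := IsBlock.comp_liftPos hf hq hb (by omega) hg
  simpa (disch := omega) only [IsBlock, liftPos, if_pos] using this

theorem isBlock_of_dropBlock_of_le {p w : ℕ} (hp : q ≤ p) (hpn : p + 7 < n)
    (hg : IsBlock (dropBlock f q) p w) : IsBlock f (p + 4) (w + 4) := by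
  have := IsBlock.comp_liftPos hf hq hb (by omega) hg
  simp (disch := omega) only [IsBlock, liftPos, if_neg, Nat.add_assoc, Nat.reduceAdd] at this ⊢
  exact this

theorem IsInflation.of_dropBlock (hg : IsInflation (n - 4) (dropBlock f q)) (hq4 : q % 4 = 0) :
    IsInflation n f := by
  have hn := hg.1
  refine ⟨by omega, fun i hi => ?_⟩
  rcases lt_trichotomy (4 * i) q with h | rfl | h
  · obtain ⟨c, hc⟩ := hg.2 i (by omega)
    exact ⟨c + 1, isBlock_of_dropBlock_of_lt hf hq hb (by omega) hc⟩
  · exact ⟨0, hb⟩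
  · obtain ⟨c, hc⟩ := hg.2 (i - 1) (by omega)
    have := isBlock_of_dropBlock_of_le hf hq hb (by omega) (by omega) hc
    rw [show 4 * (i - 1) + 4 = 4 * i by omega] at this
    exact ⟨c + 1, this⟩

theorem mod_four_eq_zero_of_dropBlock (h : AllSep n f) (hg : IsInflation (n - 4) (dropBlock f q)) :
    q % 4 = 0 := by
  have hn := hg.1
  by_contra hq4
  obtain ⟨u, r, rfl, hr⟩ : ∃ u r, q = 4 * u + r ∧ 1 ≤ r ∧ r ≤ 3 :=
    ⟨q / 4, q % 4, by omega, by omega, by omega⟩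
  have hleft : ∀ p, p + 1 = 4 * u → f p % 4 = 1 ∨ f p % 4 = 2 := fun p hp => by
    obtain ⟨c, hc⟩ := hg.2 (u - 1) (by omega)
    have := isBlock_of_dropBlock_of_lt hf hq hb (by omega) hc
    rw [IsBlock, show 4 * (u - 1) + 3 = p by omega] at this
    omega
  have hright : 4 * u + 8 < n → f (4 * u + 8) % 4 = 1 ∨ f (4 * u + 8) % 4 = 2 := fun hu => by
    obtain ⟨c, hc⟩ := hg.2 (u + 1) (by omega)
    have := isBlock_of_dropBlock_of_le hf hq hb (by omega) (by omega) hc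
    rw [IsBlock, show 4 * (u + 1) + 4 = 4 * u + 8 by omega] at this
    omega
  obtain ⟨c, hc⟩ := hg.2 u (by omega)
  exact not_isBlock_liftPos_of_split h hf hr (by omega) hb hleft hright
    (IsBlock.comp_liftPos hf hq hb (by omega) hc)

end dropBlock

theorem IsInflation.of_allSep (hf : BijOn f (Iio n) (Iio n)) (h : AllSep n f) :
    IsInflation n f := by
  induction n using Nat.strong_induction_on generalizing f with
  | _ n ih =>
  rcases Nat.eq_zero_or_pos n with rfl | hn
  · exact ⟨rfl, fun i hi => absurd hi (by omega)⟩
  obtain ⟨q, hq, hb⟩ := exists_isBlock_zero h hf hn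
  have hg := ih (n - 4) (by omega) (bijOn_dropBlock hf hq hb) (h.dropBlock hf hq hb)
  exact hg.of_dropBlock hf hq hb (mod_four_eq_zero_of_dropBlock hf hq hb h hg)

def permFun (σ : Equiv.Perm (Fin n)) (j : ℕ) : ℕ := if h : j < n then σ ⟨j, h⟩ else j

theorem permFun_of_lt (σ : Equiv.Perm (Fin n)) {j : ℕ} (hj : j < n) :
    permFun σ j = σ ⟨j, hj⟩ := dif_pos hj

theorem eq_of_permFun_eq {σ τ : Equiv.Perm (Fin n)} (h : ∀ j < n, permFun σ j = permFun τ j) :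
    σ = τ :=
  Equiv.ext fun x => Fin.ext (by simpa [permFun_of_lt _ x.isLt] using h x x.isLt)

theorem bijOn_permFun (σ : Equiv.Perm (Fin n)) : BijOn (permFun σ) (Iio n) (Iio n) := by
  have hmaps : MapsTo (permFun σ) (Iio n) (Iio n) := fun j hj => by
    simp only [mem_Iio] at hj
    simp [permFun, hj]
  refine ((finite_Iio _).injOn_iff_bijOn_of_mapsTo hmaps).mp fun i hi j hj hij => ?_
  simp only [mem_Iio] at hi hj
  simpa [permFun, hi, hj, Fin.val_inj] using hij

theorem val_inv_apply_eq_iff (σ : Equiv.Perm (Fin n)) (b : Fin n) {p : ℕ} (hp : p < n) :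
    ((σ⁻¹ b : Fin n) : ℕ) = p ↔ permFun σ p = b := by
  have := Equiv.Perm.inv_eq_iff_eq (f := σ) (x := b) (y := ⟨p, hp⟩)
  rw [Fin.ext_iff, Fin.ext_iff] at this
  rw [permFun_of_lt σ hp, this, eq_comm]

theorem isVSepVal_iff (σ : Equiv.Perm (Fin n)) (b : Fin n) :
    IsVSepVal σ b ↔ IsVSep n (permFun σ) b := by
  unfold IsVSepVal IsVSepPos IsVSep
  refine exists_congr fun j =>
    ⟨fun ⟨hj, h1, h2⟩ => ⟨hj, ?_, ?_⟩, fun ⟨hj, h1, h2⟩ => ⟨hj, ?_, ?_⟩⟩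
  · exact (val_inv_apply_eq_iff σ b (by omega)).mp h1
  · simp only [permFun_of_lt σ hj, permFun_of_lt σ (show j < n by omega)]
    omega
  · exact (val_inv_apply_eq_iff σ b (by omega)).mpr h1
  · simp only [permFun_of_lt σ hj, permFun_of_lt σ (show j < n by omega)] at h2
    omega

theorem isHSepVal_iff (σ : Equiv.Perm (Fin n)) (a : Fin n) :
    IsHSepVal σ a ↔ IsHSep n (permFun σ) a := by
  unfold IsHSepVal IsHSep
  refine exists_congr fun j => ⟨fun ⟨hj, h⟩ => ⟨hj, ?_⟩, fun ⟨hj, h⟩ => ⟨hj, ?_⟩⟩ <;>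
    simp only [permFun_of_lt σ hj, permFun_of_lt σ (show j < n by omega)] at h ⊢ <;> omega

theorem allSep_permFun_iff (σ : Equiv.Perm (Fin n)) :
    (∀ b : Fin n, IsVSepVal σ b ∨ IsHSepVal σ b) ↔ AllSep n (permFun σ) := by
  simp only [isVSepVal_iff, isHSepVal_iff, AllSep, Fin.forall_iff]

def blockPerm : Bool → Equiv.Perm (Fin 4)
  | false => ⟨![2, 0, 3, 1], ![1, 3, 0, 2], by decide, by decide⟩
  | true => ⟨![1, 3, 0, 2], ![2, 0, 3, 1], by decide, by decide⟩

theorem isBlock_iff_exists_blockPerm {q w : ℕ} :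
    IsBlock f q w ↔ ∃ e, ∀ r : Fin 4, f (q + r) = w + blockPerm e r := by
  constructor
  · rintro (h | h)
    · exact ⟨false, fun r => by fin_cases r <;> simp [blockPerm, h]⟩
    · exact ⟨true, fun r => by fin_cases r <;> simp [blockPerm, h]⟩
  · rintro ⟨e, he⟩
    have h0 := he 0
    have h1 := he 1
    have h2 := he 2
    have h3 := he 3
    cases e <;> simp_all [IsBlock, blockPerm]

def inflate {k : ℕ} (π : Equiv.Perm (Fin k)) (ε : Fin k → Bool) : Equiv.Perm (Fin (k * 4)) :=
  finProdFinEquiv.symm.trans ((Equiv.prodShear π fun i => blockPerm (ε i)).trans finProdFinEquiv)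

theorem inflate_injective {k : ℕ} :
    Function.Injective fun p : Equiv.Perm (Fin k) × (Fin k → Bool) => inflate p.1 p.2 := by
  rintro ⟨π, ε⟩ ⟨π', ε'⟩ h
  have key : ∀ i, (π i, blockPerm (ε i) 0) = (π' i, blockPerm (ε' i) 0) := fun i => by
    simpa [inflate] using
      congrArg (fun σ : Equiv.Perm _ => finProdFinEquiv.symm (σ (finProdFinEquiv (i, 0)))) h
  refine Prod.ext (Equiv.ext fun i => (Prod.ext_iff.mp (key i)).1) (funext fun i => ?_)
  have := (Prod.ext_iff.mp (key i)).2
  cases hε : ε i <;> cases hε' : ε' i <;> simp_all [blockPerm]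

theorem permFun_inflate {k : ℕ} (π : Equiv.Perm (Fin k)) (ε : Fin k → Bool) (i : Fin k)
    (r : Fin 4) : permFun (inflate π ε) (4 * i + r) = 4 * π i + blockPerm (ε i) r := by
  have h := (finProdFinEquiv (i, r)).isLt
  simp only [finProdFinEquiv_apply_val] at h
  rw [permFun_of_lt _ (by omega),
    show (⟨4 * i + r, _⟩ : Fin (k * 4)) = finProdFinEquiv (i, r) from Fin.ext (by simp; ring)]
  simp only [inflate, Equiv.trans_apply, Equiv.symm_apply_apply, Equiv.prodShear_apply,
    finProdFinEquiv_apply_val]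
  ring

theorem isBlock_inflate {k : ℕ} (π : Equiv.Perm (Fin k)) (ε : Fin k → Bool) (i : Fin k) :
    IsBlock (permFun (inflate π ε)) (4 * i) (4 * π i) :=
  isBlock_iff_exists_blockPerm.mpr ⟨ε i, permFun_inflate π ε i⟩

theorem allSep_inflate {k : ℕ} (π : Equiv.Perm (Fin k)) (ε : Fin k → Bool) :
    AllSep (k * 4) (permFun (inflate π ε)) := by
  intro b hb
  set i := π.symm ⟨b / 4, by omega⟩
  have hb' := (isBlock_inflate π ε i).sep_add (n := k * 4) (by omega) (t := b % 4) (by omega)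
  rwa [show (π i : ℕ) = b / 4 by simp [i], Nat.div_add_mod] at hb'

theorem exists_inflate_eq {k : ℕ} {σ : Equiv.Perm (Fin (k * 4))}
    (h : AllSep (k * 4) (permFun σ)) : ∃ π ε, inflate π ε = σ := by
  have hσ := bijOn_permFun σ
  have hI := IsInflation.of_allSep hσ h
  have : ∀ i : Fin k, ∃ c : Fin k, ∃ e,
      ∀ r : Fin 4, permFun σ (4 * i + r) = 4 * c + blockPerm e r := by
    intro i
    obtain ⟨c, hc⟩ := hI.2 i (by omega)
    obtain ⟨e, he⟩ := isBlock_iff_exists_blockPerm.mp hc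
    have := hσ.mapsTo (show 4 * (i : ℕ) + (0 : Fin 4) < k * 4 by simp; omega)
    simp only [mem_Iio, he] at this
    exact ⟨⟨c, by omega⟩, e, he⟩
  choose c e hce using this
  have hc : Function.Injective c := fun i i' hii' => by
    have h1 := hce i ((blockPerm (e i)).symm 0)
    have h2 := hce i' ((blockPerm (e i')).symm 0)
    simp only [Equiv.apply_symm_apply, hii'] at h1 h2
    have := hσ.injOn (by simp; omega) (by simp; omega) (h1.trans h2.symm)
    ext
    omega
  have hc' : Function.Bijective c := Finite.injective_iff_bijective.mp hc
  refine ⟨Equiv.ofBijective c hc', e, eq_of_permFun_eq fun j hj => ?_⟩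
  have := permFun_inflate (Equiv.ofBijective c hc') e ⟨j / 4, by omega⟩ ⟨j % 4, by omega⟩
  simp only [Nat.div_add_mod, Equiv.ofBijective_apply] at this
  rw [this, ← hce]
  simp only [Nat.div_add_mod]

theorem card_allSep (k : ℕ) :
    Nat.card {σ : Equiv.Perm (Fin (k * 4)) // AllSep (k * 4) (permFun σ)} =
      2 ^ k * k.factorial := by
  have hbij : Function.Bijective fun p : Equiv.Perm (Fin k) × (Fin k → Bool) =>
      (⟨inflate p.1 p.2, allSep_inflate p.1 p.2⟩ : {σ // AllSep (k * 4) (permFun σ)}) :=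
    ⟨fun p p' h => inflate_injective (congrArg Subtype.val h), fun ⟨σ, hσ⟩ => by
      obtain ⟨π, ε, rfl⟩ := exists_inflate_eq hσ
      exact ⟨(π, ε), rfl⟩⟩
  rw [← Nat.card_congr (Equiv.ofBijective _ hbij), Nat.card_prod, Nat.card_perm, Nat.card_fun]
  simp [mul_comm]

end Separators

theorem stmt8_general {n : ℕ} :
    Nat.card {σ : Equiv.Perm (Fin n) // ∀ b : Fin n, IsVSepVal σ b ∨ IsHSepVal σ b}
      = if n % 4 = 0 then 2 ^ (n / 4) * (n / 4).factorial else 0 := by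
  rw [Nat.card_congr (Equiv.subtypeEquivRight Separators.allSep_permFun_iff)]
  split_ifs with hn
  · obtain ⟨k, rfl⟩ : ∃ k, n = k * 4 := ⟨n / 4, by omega⟩
    rw [Nat.mul_div_cancel k (by norm_num), Separators.card_allSep]
  · have : IsEmpty {σ : Equiv.Perm (Fin n) // Separators.AllSep n (Separators.permFun σ)} :=
      ⟨fun σ => hn (Separators.IsInflation.of_allSep (Separators.bijOn_permFun σ.1) σ.2).1⟩
    exact Nat.card_of_isEmpty

/-- the number of permutations of `S_n` all of whose digits are
separators is `2^k · k!` when `n = 4k` (`k ≥ 1`) and `0` otherwise. -/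
theorem stmt8 {n : ℕ} (hn : 0 < n) :
    Nat.card {σ : Equiv.Perm (Fin n) // ∀ b : Fin n, IsVSepVal σ b ∨ IsHSepVal σ b}
      = if n % 4 = 0 then 2 ^ (n / 4) * (n / 4).factorial else 0 :=
  stmt8_general
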